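/- In a BCK-algebra A with ideal I, the quotient A/I (with classes C_x under the relation x ∼ y iff x·y ∈ I and y·x ∈ I) satisfies [C_x, C_y] = C_{[x,y]}; consequently A/I is commutative if and only if A' ⊆ I. -/
import Mathlib


/-- A BCK-algebra: a set with binary operation `op` and constant `0`. -/
class BCK (A : Type*) extends Zero A where
  op : A → A → A
  ax1 : ∀ x y z : A, op (op (op x y) (op x z)) (op z y) = 0
  ax2 : ∀ x y : A, op (op x (op x y)) y = 0
  ax3 : ∀ x : A, op x x = 0
  ax4 : ∀ x : A, op 0 x = 0
  ax5 : ∀ x y : A, op x y = 0 → op y x = 0 → x = y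

namespace BCK
variable {A : Type*} [BCK A]

/-- `x ∧ y := y · (y · x)` -/
def meet (x y : A) : A := op y (op y x)

/-- pseudo-commutator `[x,y] := (x ∧ y) · (y ∧ x)` -/
def pcomm (x y : A) : A := op (meet x y) (meet y x)

end BCK
namespace BCK
variable {A : Type*} [BCK A]

/-- Membership in the subalgebra generated by a subset. -/
inductive clos (S : Set A) : A → Prop
  | base {x : A} : x ∈ S → clos S x
  | mul {x y : A} : clos S x → clos S y → clos S (op x y)

/-- The lower central series: A₀ = A, A_{k+1} = [A_k, A], the subalgebra generated
by all pseudo-commutators [x,y] with x ∈ A_k, y ∈ A.  In particular A₁ = [A,A]. -/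
def lcs : ℕ → Set A
  | 0 => Set.univ
  | n + 1 => {a | clos {z | ∃ x ∈ lcs n, ∃ y : A, z = pcomm x y} a}

end BCK

namespace BCK
/-- The congruence relation on A associated to an ideal I:
x ∼ y iff x·y ∈ I and y·x ∈ I. -/
def idealRel {A : Type*} [BCK A] (I : Set A) (x y : A) : Prop :=
  op x y ∈ I ∧ op y x ∈ I

/-- The derived subalgebra A′ = [A,A], generated by all pseudo-commutators. -/
def derivedSub (A : Type*) [BCK A] : Set A :=
  {a | clos {z | ∃ x y : A, z = pcomm x y} a}
end BCK

namespace BCK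
variable {A : Type*} [BCK A]

lemma eq_zero' {x : A} (h : op x 0 = 0) : x = 0 := ax5 x 0 h (ax4 x)

lemma op_zero' (x : A) : op x 0 = x := by
  apply ax5
  · have h := ax2 x x
    rw [ax3 x] at h
    exact h
  · exact eq_zero' (ax2 x 0)

lemma le_trans' {x y z : A} (h1 : op x y = 0) (h2 : op y z = 0) : op x z = 0 := by
  have h := ax1 x z y
  rw [h1, op_zero', h2, op_zero'] at h
  exact h

lemma sub_le_self' (x y : A) : op (op x y) x = 0 := by
  have h := ax1 x y 0
  rw [op_zero' x, ax4 y] at h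
  exact eq_zero' h

lemma antimono' {x y : A} (h : op x y = 0) (z : A) : op (op z y) (op z x) = 0 := by
  have h1 := ax1 z y x
  rw [h, op_zero'] at h1
  exact h1

lemma exchange' (x y z : A) : op (op x y) z = op (op x z) y := by
  have key : ∀ a b c : A, op (op (op a b) c) (op (op a c) b) = 0 := by
    intro a b c
    have h1 : op (op (op a b) c) (op (op a b) (op a (op a c))) = 0 :=
      antimono' (ax2 a c) (op a b)
    have h2 : op (op (op a b) (op a (op a c))) (op (op a c) b) = 0 := ax1 a b (op a c)
    exact le_trans' h1 h2
  exact ax5 _ _ (key x y z) (key x z y)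

lemma sub_right' (x y z : A) : op (op (op x z) (op y z)) (op x y) = 0 := by
  rw [exchange' (op x z) (op y z) (op x y)]
  exact ax1 x z y

section Ideal
variable {I : Set A} (h0 : (0 : A) ∈ I) (hI : ∀ x y : A, op x y ∈ I → y ∈ I → x ∈ I)
include h0 hI

lemma down' {a b : A} (h : op a b = 0) (hb : b ∈ I) : a ∈ I :=
  hI a b (by rw [h]; exact h0) hb

lemma rel_trans' {x y z : A} (h1 : idealRel I x y) (h2 : idealRel I y z) :
    idealRel I x z := by
  constructor
  · have hle : op (op (op x z) (op x y)) (op y z) = 0 := ax1 x z y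
    exact hI _ _ (down' h0 hI hle h2.1) h1.1
  · have hle : op (op (op z x) (op z y)) (op y x) = 0 := ax1 z x y
    exact hI _ _ (down' h0 hI hle h1.2) h2.2

lemma rel_op_right' {x y : A} (h : idealRel I x y) (z : A) :
    idealRel I (op x z) (op y z) :=
  ⟨down' h0 hI (sub_right' x y z) h.1, down' h0 hI (sub_right' y x z) h.2⟩

lemma rel_op_left' {x y : A} (h : idealRel I x y) (z : A) :
    idealRel I (op z x) (op z y) :=
  ⟨down' h0 hI (ax1 z x y) h.2, down' h0 hI (ax1 z y x) h.1⟩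

lemma rel_op' {x y a b : A} (h1 : idealRel I x y) (h2 : idealRel I a b) :
    idealRel I (op x a) (op y b) :=
  rel_trans' h0 hI (rel_op_right' h0 hI h1 a) (rel_op_left' h0 hI h2 y)

end Ideal
end BCK

/-- The pseudo-commutator descends to the quotient A/I: [C_x, C_y] = C_{[x,y]}
(i.e. the pseudo-commutator respects the relation ∼_I), and A/I is commutative
if and only if A′ ⊆ I. -/
theorem quotient_pcomm_and_comm {A : Type*} [BCK A] (I : Set A)
    (h0 : (0 : A) ∈ I) (hI : ∀ x y : A, BCK.op x y ∈ I → y ∈ I → x ∈ I) :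
    (∀ x x' y y' : A, BCK.idealRel I x x' → BCK.idealRel I y y' →
      BCK.idealRel I (BCK.pcomm x y) (BCK.pcomm x' y')) ∧
    ((∀ x y : A, BCK.idealRel I (BCK.meet x y) (BCK.meet y x)) ↔
      BCK.derivedSub A ⊆ I) := by
  open BCK in
  constructor
  · intro x x' y y' hx hy
    have mxy : idealRel I (meet x y) (meet x' y') :=
      rel_op' h0 hI hy (rel_op' h0 hI hy hx)
    have myx : idealRel I (meet y x) (meet y' x') :=
      rel_op' h0 hI hx (rel_op' h0 hI hx hy)
    exact rel_op' h0 hI mxy myx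
  · constructor
    · intro h a ha
      induction ha with
      | base hx =>
        obtain ⟨x, y, rfl⟩ := hx
        exact (h x y).1
      | mul hu hv ihu ihv =>
        exact down' h0 hI (sub_le_self' _ _) ihu
    · intro h x y
      exact ⟨h (clos.base ⟨x, y, rfl⟩), h (clos.base ⟨y, x, rfl⟩)⟩
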